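/- arXiv:2411.18004 — 4 statements merged into one kernel-verified Lean document; each statement's English description precedes it below -/
import Mathlib

section
/- Let n ≥ 1 and let u, v ∈ ℝⁿ (with the Euclidean norm). Let 0 < ρ_min ≤ ρ̃ and ρ̃ ≤ ρ_max. Suppose ρ̃ ≤ ‖u‖ ≤ ρ_max, ρ̃ ≤ ‖v‖ ≤ ρ_max, and ‖v − u‖ ≤ 2·√(ρ̃² − ρ_min²). Then for every t ∈ [0, 1], ρ_min ≤ ‖(1 − t)·u + t·v‖ ≤ ρ_max. (Paper's Lemma on LCvx along edges: if LCvx with the perturbed lower bound ρ̃ holds at both endpoints of an edge and the rate constraint ‖u_{i+1} − u_i‖ ≤ δ(ρ̃) = 2√(ρ̃² − ρ_min²) holds, then ρ_min ≤ ‖u(t)‖ ≤ ρ_max along the whole linearly interpolated edge.) -/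
/-! Along the segment, `‖(1 - t) • u + t • v‖²` falls below the interpolated endpoint values
`(1 - t) ‖u‖² + t ‖v‖²` by exactly `t (1 - t) ‖v - u‖²`, which is at most `‖v - u‖² / 4`.
The rate constraint bounds this dip by `ρ̃² - ρ_min²`, so the lower bound survives;
the upper bound is the convexity of the closed ball of radius `ρ_max`. -/

open Set

section InnerProductSpace

variable {E : Type*} [NormedAddCommGroup E] [InnerProductSpace ℝ E]

theorem norm_one_sub_smul_add_smul_sq (u v : E) (t : ℝ) :
    ‖(1 - t) • u + t • v‖ ^ 2 =
      (1 - t) * ‖u‖ ^ 2 + t * ‖v‖ ^ 2 - t * (1 - t) * ‖v - u‖ ^ 2 := by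
  simp only [← real_inner_self_eq_norm_sq, inner_add_left, inner_add_right, inner_sub_left,
    inner_sub_right, real_inner_smul_left, real_inner_smul_right, real_inner_comm u v]
  ring

theorem sq_le_norm_one_sub_smul_add_smul_sq {u v : E} {r ρ t : ℝ}
    (hu : ρ ^ 2 ≤ ‖u‖ ^ 2) (hv : ρ ^ 2 ≤ ‖v‖ ^ 2) (huv : ‖v - u‖ ^ 2 ≤ 4 * (ρ ^ 2 - r ^ 2))
    (ht : t ∈ Icc (0 : ℝ) 1) : r ^ 2 ≤ ‖(1 - t) • u + t • v‖ ^ 2 := by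
  obtain ⟨ht0, ht1⟩ := ht
  have hdip : t * (1 - t) * ‖v - u‖ ^ 2 ≤ ρ ^ 2 - r ^ 2 := by
    have hquarter : t * (1 - t) ≤ 1 / 4 := by nlinarith [sq_nonneg (2 * t - 1)]
    nlinarith [mul_nonneg ht0 (sub_nonneg.mpr ht1), sq_nonneg ‖v - u‖]
  rw [norm_one_sub_smul_add_smul_sq]
  nlinarith [mul_le_mul_of_nonneg_left hu (sub_nonneg.mpr ht1), mul_le_mul_of_nonneg_left hv ht0]

theorem le_norm_one_sub_smul_add_smul {u v : E} {r ρ t : ℝ} (hr : 0 ≤ r) (hrρ : r ≤ ρ)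
    (hu : ρ ≤ ‖u‖) (hv : ρ ≤ ‖v‖) (huv : ‖v - u‖ ≤ 2 * √(ρ ^ 2 - r ^ 2))
    (ht : t ∈ Icc (0 : ℝ) 1) : r ≤ ‖(1 - t) • u + t • v‖ := by
  have hρ : 0 ≤ ρ := hr.trans hrρ
  have huv_sq : ‖v - u‖ ^ 2 ≤ 4 * (ρ ^ 2 - r ^ 2) := by
    calc ‖v - u‖ ^ 2 ≤ (2 * √(ρ ^ 2 - r ^ 2)) ^ 2 := by gcongr
      _ = 4 * (ρ ^ 2 - r ^ 2) := by
        rw [mul_pow, Real.sq_sqrt (sub_nonneg.mpr (by gcongr))]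
        norm_num
  refine (pow_le_pow_iff_left₀ hr (norm_nonneg _) two_ne_zero).mp ?_
  exact sq_le_norm_one_sub_smul_add_smul_sq (by gcongr) (by gcongr) huv_sq ht

end InnerProductSpace

theorem norm_one_sub_smul_add_smul_le {E : Type*} [SeminormedAddCommGroup E] [NormedSpace ℝ E]
    {u v : E} {R t : ℝ} (hu : ‖u‖ ≤ R) (hv : ‖v‖ ≤ R) (ht : t ∈ Icc (0 : ℝ) 1) :
    ‖(1 - t) • u + t • v‖ ≤ R := by
  have hmem := convex_closedBall (0 : E) R (mem_closedBall_zero_iff.mpr hu)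
    (mem_closedBall_zero_iff.mpr hv) (sub_nonneg.mpr ht.2) ht.1 (sub_add_cancel 1 t)
  exact mem_closedBall_zero_iff.mp hmem

theorem stmt_0_general (n : ℕ) (u v : EuclideanSpace ℝ (Fin n))
    (ρmin ρt ρmax : ℝ) (hρ0 : 0 < ρmin) (hρ1 : ρmin ≤ ρt)
    (hu1 : ρt ≤ ‖u‖) (hu2 : ‖u‖ ≤ ρmax)
    (hv1 : ρt ≤ ‖v‖) (hv2 : ‖v‖ ≤ ρmax)
    (hrate : ‖v - u‖ ≤ 2 * Real.sqrt (ρt ^ 2 - ρmin ^ 2)) :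
    ∀ t ∈ Set.Icc (0 : ℝ) 1,
      ρmin ≤ ‖(1 - t) • u + t • v‖ ∧ ‖(1 - t) • u + t • v‖ ≤ ρmax := fun _ ht =>
  ⟨le_norm_one_sub_smul_add_smul hρ0.le hρ1 hu1 hv1 hrate ht,
    norm_one_sub_smul_add_smul_le hu2 hv2 ht⟩

/-- Edge LCvx lemma: if the perturbed bounds hold at both endpoints of an edge and
the rate constraint `‖v - u‖ ≤ 2√(ρ̃² − ρ_min²)` holds, then
`ρ_min ≤ ‖u(t)‖ ≤ ρ_max` along the whole linearly interpolated edge. -/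
theorem stmt_0 (n : ℕ) (hn : 1 ≤ n) (u v : EuclideanSpace ℝ (Fin n))
    (ρmin ρt ρmax : ℝ) (hρ0 : 0 < ρmin) (hρ1 : ρmin ≤ ρt) (hρ2 : ρt ≤ ρmax)
    (hu1 : ρt ≤ ‖u‖) (hu2 : ‖u‖ ≤ ρmax)
    (hv1 : ρt ≤ ‖v‖) (hv2 : ‖v‖ ≤ ρmax)
    (hrate : ‖v - u‖ ≤ 2 * Real.sqrt (ρt ^ 2 - ρmin ^ 2)) :
    ∀ t ∈ Set.Icc (0 : ℝ) 1,
      ρmin ≤ ‖(1 - t) • u + t • v‖ ∧ ‖(1 - t) • u + t • v‖ ≤ ρmax :=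
  stmt_0_general n u v ρmin ρt ρmax hρ0 hρ1 hu1 hu2 hv1 hv2 hrate
end

section
/- Fix N ≥ 1, matrices A ∈ ℝ^{n_x×n_x}, B₀, B₁ ∈ ℝ^{n_x×n_u}, a matrix G_mat ∈ ℝ^{n_G×n_x} and vector g ∈ ℝ^{n_G}, a point x_init ∈ ℝ^{n_x}, a convex continuous function m : ℝ^{n_x} → ℝ, convex continuous functions l_i : ℝ → ℝ for i = 1, …, N+1, and 0 < ρ_min < ρ_max. Let F be the set of tuples (x₁,…,x_{N+1}, u₁,…,u_{N+1}, σ₁,…,σ_{N+1}) with x_i ∈ ℝ^{n_x}, u_i ∈ ℝ^{n_u}, σ_i ∈ ℝ satisfying: x_{i+1} = A x_i + B₀ u_i + B₁ u_{i+1} for all 1 ≤ i ≤ N; (u_i, σ_i) ∈ V for all 1 ≤ i ≤ N+1; x₁ = x_init; and G_mat x_{N+1} + g = 0. Assume there exists a point of F with ‖u_i‖ < ρ_max for all i (Slater-type assumption). Then for any minimizer (x*, u*, σ*) of the cost J(x, u, σ) = m(x_{N+1}) + Σ_{i=1}^{N+1} l_i(σ_i) over F, there exist dual variables η₁,…,η_N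 ∈ ℝ^{n_x}, μ₁ ∈ ℝ^{n_x}, μ₂ ∈ ℝ^{n_G} such that (x*, u*, σ*) minimizes the Lagrangian L(x, u, σ) = m(x_{N+1}) + Σ_{i=1}^{N+1} l_i(σ_i) + Σ_{i=1}^{N} ⟨η_i, −x_{i+1} + A x_i + B₀ u_i + B₁ u_{i+1}⟩ + ⟨μ₁, x₁ − x_init⟩ + ⟨μ₂, G_mat x_{N+1} + g⟩ over all tuples (x, u, σ) with (u_i, σ_i) ∈ V for all i (and x unconstrained). -/
/-!
The problem is a convex program: the cost is convex, the control constraints `(uᵢ, σᵢ) ∈ V`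
cut out a convex set `K`, and the remaining constraints say that an affine map `T` vanishes.
Separating `(0, J*)` from the convex set `{(T z, r) | z ∈ K, J z ≤ r}` yields a functional whose
`r`-coefficient is positive as soon as that set has interior points `(0, r)`; after rescaling,
its `T`-part is a Lagrange multiplier, and `η, μ₁, μ₂` are the Riesz representatives of its
components. The interior points come from the Slater point: raising each `σᵢ` strictly between
`max ρmin ‖uᵢ‖` and `ρmax` puts it in the interior of `K`, and a continuous right inverse of the
linear part of `T` on its range turns small constraint values into nearby points of `K`.
-/

open RealInnerProductSpace

/-- Matrix-vector multiplication viewed as a map between Euclidean spaces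
(definitionally `Matrix.mulVec`). -/
def mulVecE {k n : ℕ} (M : Matrix (Fin k) (Fin n) ℝ)
    (v : EuclideanSpace ℝ (Fin n)) : EuclideanSpace ℝ (Fin k) :=
  WithLp.toLp 2 (M.mulVec v)

open Set Filter Topology

theorem Convex.exists_separating_of_notMem_interior {E : Type*} [NormedAddCommGroup E]
    [NormedSpace ℝ E] {B : Set E} {x : E} (hB : Convex ℝ B) (hne : (interior B).Nonempty)
    (hx : x ∉ interior B) :
    ∃ ψ : StrongDual ℝ E, (∀ q ∈ interior B, ψ x < ψ q) ∧ ∀ q ∈ B, ψ x ≤ ψ q := by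
  obtain ⟨ψ, hψ⟩ := geometric_hahn_banach_point_open hB.interior isOpen_interior hx
  have hcl : closure (interior B) ⊆ {q | ψ x ≤ ψ q} :=
    closure_minimal (fun q hq => (hψ q hq).le) (isClosed_le continuous_const ψ.continuous)
  rw [hB.closure_interior_eq_closure_of_nonempty_interior hne] at hcl
  exact ⟨ψ, hψ, fun q hq => hcl (subset_closure hq)⟩

namespace ConvexOn

variable {E F : Type*} {K : Set E} {f : E → ℝ} {v : ℝ}

theorem exists_multiplier_of_eventually [AddCommGroup E] [Module ℝ E] [NormedAddCommGroup F]
    [NormedSpace ℝ F] (hf : ConvexOn ℝ K f) (T : E →ᵃ[ℝ] F)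
    (hv : ∀ z ∈ K, T z = 0 → v ≤ f z) {M : ℝ}
    (hT : ∀ᶠ y in 𝓝 0, ∃ z ∈ K, T z = y ∧ f z ≤ M) :
    ∃ φ : StrongDual ℝ F, ∀ z ∈ K, v ≤ f z + φ (T z) := by
  set B : Set (F × ℝ) := T.prodMap (AffineMap.id ℝ ℝ) '' {q | q.1 ∈ K ∧ f q.1 ≤ q.2}
  have hmemB : ∀ z ∈ K, ∀ r, f z ≤ r → (T z, r) ∈ B := fun z hz r hr => ⟨(z, r), ⟨hz, hr⟩, rfl⟩
  obtain ⟨W, hW, hWo, hW0⟩ := eventually_nhds_iff.1 hT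
  have hint : ∀ r, M < r → ((0 : F), r) ∈ interior B := by
    refine fun r hr => interior_maximal ?_ (hWo.prod isOpen_Ioi) ⟨hW0, hr⟩
    rintro ⟨y, s⟩ ⟨hy, hs⟩
    obtain ⟨z, hz, rfl, hfz⟩ := hW y hy
    exact hmemB z hz s (hfz.trans hs.le)
  have hv0 : ((0 : F), v) ∉ interior B := by
    intro h
    have hlim : Tendsto (fun t : ℝ => ((0 : F), v - t)) (𝓝[>] 0) (𝓝 ((0 : F), v)) :=
      (Continuous.tendsto' (by fun_prop) 0 _ (by simp)).mono_left nhdsWithin_le_nhds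
    obtain ⟨t, htB, ht⟩ :=
      ((hlim.eventually (isOpen_interior.mem_nhds h)).and self_mem_nhdsWithin).exists
    obtain ⟨⟨z, r⟩, ⟨hz, hfz⟩, hzr⟩ := interior_subset htB
    simp only [AffineMap.prodMap_apply, AffineMap.id_apply, Prod.mk.injEq] at hzr
    linarith [hv z hz hzr.1, hzr.2, show 0 < t from ht]
  obtain ⟨ψ, hψint, hψ⟩ := (hf.convex_epigraph.affine_image _).exists_separating_of_notMem_interior
    ⟨_, hint _ (lt_add_one M)⟩ hv0
  set ℓ := ψ ∘L ContinuousLinearMap.inl ℝ F ℝ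
  set c := (ψ ∘L ContinuousLinearMap.inr ℝ F ℝ) 1
  have hsplit : ∀ y r, ψ (y, r) = ℓ y + r * c := fun y r => by
    rw [← ψ.comp_inl_add_comp_inr, ← smul_eq_mul, ← map_smul, smul_eq_mul, mul_one]
  have hc : 0 < c := by
    have := hψint _ (hint _ ((le_max_left M v).trans_lt (lt_add_one _)))
    rw [hsplit, hsplit, map_zero] at this
    nlinarith [le_max_right M v]
  refine ⟨c⁻¹ • ℓ, fun z hz => ?_⟩
  have := hψ _ (hmemB z hz _ le_rfl)
  rw [hsplit, hsplit, map_zero] at this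
  rw [smul_apply, smul_eq_mul, ← div_eq_inv_mul, ← sub_le_iff_le_add', le_div_iff₀ hc]
  linarith

/-- `T` need not be surjective, so the multiplier is first found on the range `S` of its linear
part, where a continuous right inverse turns small constraint values into points near `z₀`, and
then extended to `F` by Hahn–Banach. -/
theorem exists_multiplier_of_slater [NormedAddCommGroup E] [NormedSpace ℝ E]
    [NormedAddCommGroup F] [NormedSpace ℝ F] [FiniteDimensional ℝ F] (hf : ConvexOn ℝ K f)
    (T : E →ᵃ[ℝ] F) (hv : ∀ z ∈ K, T z = 0 → v ≤ f z) {z₀ : E} (hz₀ : z₀ ∈ interior K)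
    (hTz₀ : T z₀ = 0) (hfz₀ : ContinuousAt f z₀) :
    ∃ φ : StrongDual ℝ F, ∀ z ∈ K, v ≤ f z + φ (T z) := by
  set S := LinearMap.range T.linear
  have hTS : ∀ z, T z ∈ S := fun z => ⟨z - z₀, by simpa [hTz₀] using T.linearMap_vsub z z₀⟩
  let T' : E →ᵃ[ℝ] S :=
    { toFun := fun z => ⟨T z, hTS z⟩
      linear := T.linear.rangeRestrict
      map_vadd' := fun z w => Subtype.ext (T.map_vadd z w) }
  obtain ⟨R, hR⟩ := T.linear.rangeRestrict.exists_rightInverse_of_surjective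
    T.linear.range_rangeRestrict
  have hTR : ∀ y, T (z₀ + R y) = y := fun y => by
    rw [add_comm, ← vadd_eq_add, T.map_vadd, hTz₀, vadd_eq_add, add_zero]
    exact congrArg Subtype.val (LinearMap.congr_fun hR y)
  have hlim : Tendsto (fun y => z₀ + R y) (𝓝 0) (𝓝 z₀) := by
    have hRc : Continuous R := R.continuous_of_finiteDimensional
    exact Continuous.tendsto' (by fun_prop) 0 z₀ (by simp)
  have hT' : ∀ᶠ y in 𝓝 (0 : S), ∃ z ∈ K, T' z = y ∧ f z ≤ f z₀ + 1 := by
    filter_upwards [hlim.eventually (mem_interior_iff_mem_nhds.1 hz₀),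
      hlim.eventually (hfz₀.eventually (gt_mem_nhds (lt_add_one _)))] with y hyK hyf
    exact ⟨z₀ + R y, hyK, Subtype.ext (hTR y), hyf.le⟩
  obtain ⟨φ, hφ⟩ := hf.exists_multiplier_of_eventually T'
    (fun z hz hTz => hv z hz (congrArg Subtype.val hTz)) hT'
  obtain ⟨ψ, hψ, -⟩ := exists_extension_norm_eq S φ
  exact ⟨ψ, fun z hz => hψ (T' z) ▸ hφ z hz⟩

end ConvexOn

def controlSet (U : Type*) [Norm U] (ρmin ρmax : ℝ) : Set (U × ℝ) :=
  {q | ρmin ≤ q.2 ∧ q.2 ≤ ρmax ∧ ‖q.1‖ ≤ q.2}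

section ControlSet

variable {ι X U : Type*} {ρmin ρmax : ℝ}

theorem convex_controlSet [SeminormedAddCommGroup U] [NormedSpace ℝ U] :
    Convex ℝ (controlSet U ρmin ρmax) := by
  have hband : Convex ℝ (Prod.snd ⁻¹' Icc ρmin ρmax : Set (U × ℝ)) :=
    (convex_Icc ρmin ρmax).linear_preimage (LinearMap.snd ℝ U ℝ)
  have hcone := (convexOn_norm (E := U) convex_univ).convex_epigraph
  convert hband.inter hcone using 1
  ext q
  simp [controlSet, and_assoc]

theorem convex_forall_mem_controlSet [AddCommGroup X] [Module ℝ X] [SeminormedAddCommGroup U]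
    [NormedSpace ℝ U] :
    Convex ℝ {p : X × (ι → U) × (ι → ℝ) | ∀ i, (p.2.1 i, p.2.2 i) ∈ controlSet U ρmin ρmax} :=
  fun _ hp _ hq _ _ ha hb hab i => convex_controlSet (hp i) (hq i) ha hb hab

theorem exists_mem_interior_controlSet [TopologicalSpace X] [SeminormedAddCommGroup U] [Finite ι]
    (hρ : ρmin < ρmax) (x : X) {u : ι → U} (hu : ∀ i, ‖u i‖ < ρmax) :
    ∃ σ : ι → ℝ, (x, u, σ) ∈
      interior {p : X × (ι → U) × (ι → ℝ) | ∀ i, (p.2.1 i, p.2.2 i) ∈ controlSet U ρmin ρmax} := by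
  refine ⟨fun i => (max ρmin ‖u i‖ + ρmax) / 2, interior_maximal
    (t := {p | ∀ i, ρmin < p.2.2 i ∧ p.2.2 i < ρmax ∧ ‖p.2.1 i‖ < p.2.2 i})
    (fun p hp i => ⟨(hp i).1.le, (hp i).2.1.le, (hp i).2.2.le⟩) ?_ fun i => ?_⟩
  · rw [ofPred_forall]
    exact isOpen_iInter_of_finite fun i => (isOpen_lt continuous_const (by fun_prop)).and
      ((isOpen_lt (by fun_prop) continuous_const).and (isOpen_lt (by fun_prop) (by fun_prop)))
  · have := max_lt hρ (hu i)
    exact ⟨by linarith [le_max_left ρmin ‖u i‖], by linarith,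
      by linarith [le_max_right ρmin ‖u i‖]⟩

end ControlSet

theorem convexOn_apply_add_sum {ι X U : Type*} [Fintype ι] [AddCommGroup X] [Module ℝ X]
    [AddCommGroup U] [Module ℝ U] {m : X → ℝ} {l : ι → ℝ → ℝ} (hm : ConvexOn ℝ univ m)
    (hl : ∀ i, ConvexOn ℝ univ (l i)) (k : ι) :
    ConvexOn ℝ univ (fun p : (ι → X) × (ι → U) × (ι → ℝ) => m (p.1 k) + ∑ i, l i (p.2.2 i)) := by
  have hsum : ConvexOn ℝ univ (fun σ : ι → ℝ => ∑ i, l i (σ i)) := by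
    simpa [← Finset.sum_fn] using Finset.sum_induction (fun i (σ : ι → ℝ) => l i (σ i))
      (ConvexOn ℝ univ) (fun _ _ => ConvexOn.add) (convexOn_const 0 convex_univ)
      fun i _ => (hl i).comp_linearMap (LinearMap.proj (R := ℝ) (φ := fun _ => ℝ) i)
  have hlast := hm.comp_linearMap
    (LinearMap.proj (R := ℝ) (φ := fun _ => X) k ∘ₗ LinearMap.fst ℝ (ι → X) ((ι → U) × (ι → ℝ)))
  exact hlast.add (hsum.comp_linearMap (LinearMap.snd ℝ _ _ ∘ₗ LinearMap.snd ℝ _ _))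

theorem StrongDual.exists_inner_repr_prod {ι X Y : Type*} [Fintype ι] [DecidableEq ι]
    [NormedAddCommGroup X] [InnerProductSpace ℝ X] [CompleteSpace X]
    [NormedAddCommGroup Y] [InnerProductSpace ℝ Y] [CompleteSpace Y]
    (φ : StrongDual ℝ (X × (ι → X) × Y)) :
    ∃ (η : ι → X) (μ₁ : X) (μ₂ : Y), ∀ a b c,
      φ (a, b, c) = ∑ i, ⟪η i, b i⟫ + ⟪μ₁, a⟫ + ⟪μ₂, c⟫ := by
  open ContinuousLinearMap InnerProductSpace in
  refine ⟨fun i => (toDual ℝ X).symm (φ ∘L inr ℝ X _ ∘L inl ℝ _ Y ∘L single ℝ (fun _ : ι => X) i),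
    (toDual ℝ X).symm (φ ∘L inl ℝ X _), (toDual ℝ Y).symm (φ ∘L inr ℝ X _ ∘L inr ℝ _ Y),
    fun a b c => ?_⟩
  simp only [toDual_symm_apply, comp_apply, inl_apply, inr_apply]
  rw [← map_sum, ← map_add, ← map_add]
  congr 1
  simp [Prod.ext_iff, Prod.fst_sum, Prod.snd_sum, Finset.univ_sum_single]

theorem mulVecE_eq_toEuclideanLin {k n : ℕ} (M : Matrix (Fin k) (Fin n) ℝ) :
    mulVecE M = Matrix.toEuclideanLin M := rfl

section Constraint

variable {N nx nu nG : ℕ} (A : Matrix (Fin nx) (Fin nx) ℝ) (B0 B1 : Matrix (Fin nx) (Fin nu) ℝ)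
  (Gmat : Matrix (Fin nG) (Fin nx) ℝ) (g : EuclideanSpace ℝ (Fin nG))
  (xinit : EuclideanSpace ℝ (Fin nx))

noncomputable def lcvxConstraintLinear :
    ((Fin (N + 1) → EuclideanSpace ℝ (Fin nx)) × (Fin (N + 1) → EuclideanSpace ℝ (Fin nu)) ×
      (Fin (N + 1) → ℝ)) →ₗ[ℝ]
    EuclideanSpace ℝ (Fin nx) × (Fin N → EuclideanSpace ℝ (Fin nx)) ×
      EuclideanSpace ℝ (Fin nG) where
  toFun p := (p.1 0, fun i => -p.1 i.succ + mulVecE A (p.1 i.castSucc)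
      + mulVecE B0 (p.2.1 i.castSucc) + mulVecE B1 (p.2.1 i.succ),
    mulVecE Gmat (p.1 (Fin.last N)))
  map_add' p q := Prod.ext rfl <| Prod.ext
    (funext fun i => by simp only [mulVecE_eq_toEuclideanLin, Prod.fst_add, Prod.snd_add,
      Pi.add_apply, map_add]; abel)
    (by simp [mulVecE_eq_toEuclideanLin])
  map_smul' t p := Prod.ext rfl <| Prod.ext
    (funext fun i => by simp [mulVecE_eq_toEuclideanLin, smul_add])
    (by simp [mulVecE_eq_toEuclideanLin])

noncomputable def lcvxConstraint :
    ((Fin (N + 1) → EuclideanSpace ℝ (Fin nx)) × (Fin (N + 1) → EuclideanSpace ℝ (Fin nu)) ×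
      (Fin (N + 1) → ℝ)) →ᵃ[ℝ]
    EuclideanSpace ℝ (Fin nx) × (Fin N → EuclideanSpace ℝ (Fin nx)) × EuclideanSpace ℝ (Fin nG) :=
  (lcvxConstraintLinear A B0 B1 Gmat).toAffineMap + AffineMap.const ℝ _ (-xinit, 0, g)

theorem lcvxConstraint_apply (p) :
    lcvxConstraint A B0 B1 Gmat g xinit p = (p.1 0 - xinit,
      fun i : Fin N => -p.1 i.succ + mulVecE A (p.1 i.castSucc) + mulVecE B0 (p.2.1 i.castSucc)
        + mulVecE B1 (p.2.1 i.succ),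
      mulVecE Gmat (p.1 (Fin.last N)) + g) := by
  simp [lcvxConstraint, lcvxConstraintLinear, sub_eq_add_neg]

theorem lcvxConstraint_eq_zero_iff (p) :
    lcvxConstraint A B0 B1 Gmat g xinit p = 0 ↔
      (∀ i : Fin N, p.1 i.succ = mulVecE A (p.1 i.castSucc) + mulVecE B0 (p.2.1 i.castSucc)
        + mulVecE B1 (p.2.1 i.succ)) ∧ p.1 0 = xinit ∧ mulVecE Gmat (p.1 (Fin.last N)) + g = 0 := by
  simp only [lcvxConstraint_apply, Prod.mk_eq_zero, sub_eq_zero, funext_iff, Pi.zero_apply,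
    add_assoc, neg_add_eq_zero]
  tauto

end Constraint

theorem stmt_6_general (N nx nu nG : ℕ)
    (A : Matrix (Fin nx) (Fin nx) ℝ) (B0 B1 : Matrix (Fin nx) (Fin nu) ℝ)
    (Gmat : Matrix (Fin nG) (Fin nx) ℝ) (g : EuclideanSpace ℝ (Fin nG))
    (xinit : EuclideanSpace ℝ (Fin nx))
    (m : EuclideanSpace ℝ (Fin nx) → ℝ)
    (hmconv : ConvexOn ℝ Set.univ m) (hmcont : Continuous m)
    (l : Fin (N + 1) → ℝ → ℝ)
    (hlconv : ∀ i, ConvexOn ℝ Set.univ (l i)) (hlcont : ∀ i, Continuous (l i))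
    (ρmin ρmax : ℝ) (hρ : ρmin < ρmax)
    (F : Set ((Fin (N + 1) → EuclideanSpace ℝ (Fin nx)) ×
      (Fin (N + 1) → EuclideanSpace ℝ (Fin nu)) × (Fin (N + 1) → ℝ)))
    (hF : F = {p | (∀ i : Fin N,
          p.1 i.succ = mulVecE A (p.1 i.castSucc) + mulVecE B0 (p.2.1 i.castSucc)
            + mulVecE B1 (p.2.1 i.succ)) ∧
        (∀ i, ρmin ≤ p.2.2 i ∧ p.2.2 i ≤ ρmax ∧ ‖p.2.1 i‖ ≤ p.2.2 i) ∧
        p.1 0 = xinit ∧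
        mulVecE Gmat (p.1 (Fin.last N)) + g = 0})
    (J : ((Fin (N + 1) → EuclideanSpace ℝ (Fin nx)) ×
      (Fin (N + 1) → EuclideanSpace ℝ (Fin nu)) × (Fin (N + 1) → ℝ)) → ℝ)
    (hJ : J = fun p => m (p.1 (Fin.last N)) + ∑ i, l i (p.2.2 i))
    (hSlater : ∃ p ∈ F, ∀ i, ‖p.2.1 i‖ < ρmax)
    (pstar : (Fin (N + 1) → EuclideanSpace ℝ (Fin nx)) ×
      (Fin (N + 1) → EuclideanSpace ℝ (Fin nu)) × (Fin (N + 1) → ℝ))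
    (hfeas : pstar ∈ F) (hmin : ∀ p ∈ F, J pstar ≤ J p) :
    ∃ (η : Fin N → EuclideanSpace ℝ (Fin nx)) (μ1 : EuclideanSpace ℝ (Fin nx))
      (μ2 : EuclideanSpace ℝ (Fin nG)),
      ∀ p : (Fin (N + 1) → EuclideanSpace ℝ (Fin nx)) ×
        (Fin (N + 1) → EuclideanSpace ℝ (Fin nu)) × (Fin (N + 1) → ℝ),
        (∀ i, ρmin ≤ p.2.2 i ∧ p.2.2 i ≤ ρmax ∧ ‖p.2.1 i‖ ≤ p.2.2 i) →
        (J pstar + (∑ i : Fin N, ⟪η i,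
              -pstar.1 i.succ + mulVecE A (pstar.1 i.castSucc)
                + mulVecE B0 (pstar.2.1 i.castSucc) + mulVecE B1 (pstar.2.1 i.succ)⟫)
            + ⟪μ1, pstar.1 0 - xinit⟫
            + ⟪μ2, mulVecE Gmat (pstar.1 (Fin.last N)) + g⟫) ≤
        (J p + (∑ i : Fin N, ⟪η i,
              -p.1 i.succ + mulVecE A (p.1 i.castSucc)
                + mulVecE B0 (p.2.1 i.castSucc) + mulVecE B1 (p.2.1 i.succ)⟫)
            + ⟪μ1, p.1 0 - xinit⟫
            + ⟪μ2, mulVecE Gmat (p.1 (Fin.last N)) + g⟫) := by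
  subst hF hJ
  obtain ⟨phat, ⟨hdyn, -, hx0, hterm⟩, hslater⟩ := hSlater
  obtain ⟨σ, hσ⟩ := exists_mem_interior_controlSet hρ phat.1 hslater
  have hcost := (convexOn_apply_add_sum hmconv hlconv (Fin.last N)).subset (subset_univ _)
    (convex_forall_mem_controlSet (U := EuclideanSpace ℝ (Fin nu)) (ρmin := ρmin) (ρmax := ρmax))
  obtain ⟨φ, hφ⟩ := hcost.exists_multiplier_of_slater (lcvxConstraint A B0 B1 Gmat g xinit)
    (fun z hz hTz => by
      obtain ⟨hzdyn, hz0, hzterm⟩ := (lcvxConstraint_eq_zero_iff ..).1 hTz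
      exact hmin z ⟨hzdyn, hz, hz0, hzterm⟩)
    hσ ((lcvxConstraint_eq_zero_iff ..).2 ⟨hdyn, hx0, hterm⟩) (by fun_prop)
  obtain ⟨η, μ1, μ2, hrep⟩ := φ.exists_inner_repr_prod
  refine ⟨η, μ1, μ2, fun p hp => ?_⟩
  have hφstar := congrArg φ <| (lcvxConstraint_eq_zero_iff A B0 B1 Gmat g xinit pstar).2
    ⟨hfeas.1, hfeas.2.2.1, hfeas.2.2.2⟩
  have hφp := hφ p hp
  rw [lcvxConstraint_apply, hrep, map_zero] at hφstar
  rw [lcvxConstraint_apply, hrep] at hφp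
  dsimp only
  linarith

/-- Strong duality / existence of Lagrange multipliers (via Slater's condition)
for the discretized LCvx problem with piecewise linear controls: any minimizer
of the cost over the feasible set `F` also minimizes the Lagrangian, for some
dual variables `η, μ₁, μ₂`, over all tuples satisfying only the control
constraints `(uᵢ, σᵢ) ∈ V`. -/
theorem stmt_6 (N nx nu nG : ℕ) (hN : 1 ≤ N)
    (A : Matrix (Fin nx) (Fin nx) ℝ) (B0 B1 : Matrix (Fin nx) (Fin nu) ℝ)
    (Gmat : Matrix (Fin nG) (Fin nx) ℝ) (g : EuclideanSpace ℝ (Fin nG))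
    (xinit : EuclideanSpace ℝ (Fin nx))
    (m : EuclideanSpace ℝ (Fin nx) → ℝ)
    (hmconv : ConvexOn ℝ Set.univ m) (hmcont : Continuous m)
    (l : Fin (N + 1) → ℝ → ℝ)
    (hlconv : ∀ i, ConvexOn ℝ Set.univ (l i)) (hlcont : ∀ i, Continuous (l i))
    (ρmin ρmax : ℝ) (hρ0 : 0 < ρmin) (hρ : ρmin < ρmax)
    (F : Set ((Fin (N + 1) → EuclideanSpace ℝ (Fin nx)) ×
      (Fin (N + 1) → EuclideanSpace ℝ (Fin nu)) × (Fin (N + 1) → ℝ)))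
    (hF : F = {p | (∀ i : Fin N,
          p.1 i.succ = mulVecE A (p.1 i.castSucc) + mulVecE B0 (p.2.1 i.castSucc)
            + mulVecE B1 (p.2.1 i.succ)) ∧
        (∀ i, ρmin ≤ p.2.2 i ∧ p.2.2 i ≤ ρmax ∧ ‖p.2.1 i‖ ≤ p.2.2 i) ∧
        p.1 0 = xinit ∧
        mulVecE Gmat (p.1 (Fin.last N)) + g = 0})
    (J : ((Fin (N + 1) → EuclideanSpace ℝ (Fin nx)) ×
      (Fin (N + 1) → EuclideanSpace ℝ (Fin nu)) × (Fin (N + 1) → ℝ)) → ℝ)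
    (hJ : J = fun p => m (p.1 (Fin.last N)) + ∑ i, l i (p.2.2 i))
    (hSlater : ∃ p ∈ F, ∀ i, ‖p.2.1 i‖ < ρmax)
    (pstar : (Fin (N + 1) → EuclideanSpace ℝ (Fin nx)) ×
      (Fin (N + 1) → EuclideanSpace ℝ (Fin nu)) × (Fin (N + 1) → ℝ))
    (hfeas : pstar ∈ F) (hmin : ∀ p ∈ F, J pstar ≤ J p) :
    ∃ (η : Fin N → EuclideanSpace ℝ (Fin nx)) (μ1 : EuclideanSpace ℝ (Fin nx))
      (μ2 : EuclideanSpace ℝ (Fin nG)),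
      ∀ p : (Fin (N + 1) → EuclideanSpace ℝ (Fin nx)) ×
        (Fin (N + 1) → EuclideanSpace ℝ (Fin nu)) × (Fin (N + 1) → ℝ),
        (∀ i, ρmin ≤ p.2.2 i ∧ p.2.2 i ≤ ρmax ∧ ‖p.2.1 i‖ ≤ p.2.2 i) →
        (J pstar + (∑ i : Fin N, ⟪η i,
              -pstar.1 i.succ + mulVecE A (pstar.1 i.castSucc)
                + mulVecE B0 (pstar.2.1 i.castSucc) + mulVecE B1 (pstar.2.1 i.succ)⟫)
            + ⟪μ1, pstar.1 0 - xinit⟫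
            + ⟪μ2, mulVecE Gmat (pstar.1 (Fin.last N)) + g⟫) ≤
        (J p + (∑ i : Fin N, ⟪η i,
              -p.1 i.succ + mulVecE A (p.1 i.castSucc)
                + mulVecE B0 (p.2.1 i.castSucc) + mulVecE B1 (p.2.1 i.succ)⟫)
            + ⟪μ1, p.1 0 - xinit⟫
            + ⟪μ2, mulVecE Gmat (p.1 (Fin.last N)) + g⟫) :=
  stmt_6_general N nx nu nG A B0 B1 Gmat g xinit m hmconv hmcont l hlconv hlcont ρmin ρmax hρ F hF J
    hJ hSlater pstar hfeas hmin
end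

section
/- Let M ∈ ℝ^{n_x×n_u}, η ∈ ℝ^{n_x}, and σ ∈ ℝ with 0 < ρ_min ≤ σ ≤ ρ_max. Suppose u* ∈ ℝ^{n_u} minimizes the linear function u ↦ ⟨η, M u⟩ over the ball V(σ) = {u ∈ ℝ^{n_u} : ‖u‖ ≤ σ}. If Mᵀη ≠ 0, then ‖u*‖ = σ and hence ρ_min ≤ ‖u*‖ ≤ ρ_max, i.e., LCvx holds at that vertex. (Proposition giving sufficient dual conditions for LCvx at a vertex: taking M = B₀ for i = 1, M = B₁ for i = N+1, and M = B₀ + A B₁ for interior vertices, the condition Mᵀη_i ≠ 0 guarantees LCvx at vertex i.) -/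
open RealInnerProductSpace Matrix

lemma inner_mulVecE {k n : ℕ} (M : Matrix (Fin k) (Fin n) ℝ)
    (η : EuclideanSpace ℝ (Fin k)) (u : EuclideanSpace ℝ (Fin n)) :
    ⟪η, mulVecE M u⟫ = ⟪mulVecE Mᵀ η, u⟫ := by
  simp only [mulVecE, EuclideanSpace.inner_eq_star_dotProduct, star_trivial, mulVec_transpose,
    dotProduct_mulVec, dotProduct_comm]

section InnerProductSpace

variable {E : Type*} [NormedAddCommGroup E] [InnerProductSpace ℝ E]

lemma real_inner_neg_smul_self_div_norm (w : E) {σ : ℝ} (hw : w ≠ 0) :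
    ⟪w, (-(σ / ‖w‖)) • w⟫ = -(σ * ‖w‖) := by
  have hw' : ‖w‖ ≠ 0 := norm_ne_zero_iff.mpr hw
  rw [real_inner_smul_right, real_inner_self_eq_norm_sq]
  field_simp

/-- Test against `-(σ / ‖w‖) • w`, where `⟪w, ·⟫` takes the value `-σ ‖w‖`; Cauchy–Schwarz
bounds `⟪w, u⟫` below by `-‖w‖ ‖u‖`. -/
theorem norm_eq_radius_of_minimizes_real_inner {w u : E} {σ : ℝ} (hw : w ≠ 0)
    (hu : ‖u‖ ≤ σ) (hmin : ∀ v : E, ‖v‖ ≤ σ → ⟪w, u⟫ ≤ ⟪w, v⟫) : ‖u‖ = σ := by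
  have hσ : 0 ≤ σ := (norm_nonneg u).trans hu
  have hwpos : 0 < ‖w‖ := norm_pos_iff.mpr hw
  have hv : ‖(-(σ / ‖w‖)) • w‖ = σ := by
    rw [norm_smul, norm_neg, Real.norm_of_nonneg (by positivity), div_mul_cancel₀ _ hwpos.ne']
  have hle : -(‖w‖ * ‖u‖) ≤ -(σ * ‖w‖) := calc
    -(‖w‖ * ‖u‖) ≤ ⟪w, u⟫ := neg_le_of_abs_le (abs_real_inner_le_norm w u)
    _ ≤ ⟪w, (-(σ / ‖w‖)) • w⟫ := hmin _ hv.le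
    _ = -(σ * ‖w‖) := real_inner_neg_smul_self_div_norm w hw
  refine le_antisymm hu ?_
  nlinarith

end InnerProductSpace

theorem stmt_9_general (nx nu : ℕ) (M : Matrix (Fin nx) (Fin nu) ℝ)
    (η : EuclideanSpace ℝ (Fin nx)) (σ ρmin ρmax : ℝ)
    (h1 : ρmin ≤ σ) (h2 : σ ≤ ρmax)
    (ustar : EuclideanSpace ℝ (Fin nu)) (hfeas : ‖ustar‖ ≤ σ)
    (hmin : ∀ u : EuclideanSpace ℝ (Fin nu), ‖u‖ ≤ σ →
      ⟪η, mulVecE M ustar⟫ ≤ ⟪η, mulVecE M u⟫)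
    (hMη : mulVecE Mᵀ η ≠ 0) :
    ‖ustar‖ = σ ∧ ρmin ≤ ‖ustar‖ ∧ ‖ustar‖ ≤ ρmax := by
  simp only [inner_mulVecE] at hmin
  have hnorm : ‖ustar‖ = σ := norm_eq_radius_of_minimizes_real_inner hMη hfeas hmin
  exact ⟨hnorm, hnorm ▸ h1, hnorm ▸ h2⟩

/-- Sufficient dual condition for LCvx at a vertex: if `u*` minimizes
`u ↦ ⟨η, M u⟩` over the ball `V(σ) = {‖u‖ ≤ σ}` with `ρ_min ≤ σ ≤ ρ_max` and
`Mᵀη ≠ 0`, then `‖u*‖ = σ` and hence `ρ_min ≤ ‖u*‖ ≤ ρ_max`. -/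
theorem stmt_9 (nx nu : ℕ) (M : Matrix (Fin nx) (Fin nu) ℝ)
    (η : EuclideanSpace ℝ (Fin nx)) (σ ρmin ρmax : ℝ)
    (h0 : 0 < ρmin) (h1 : ρmin ≤ σ) (h2 : σ ≤ ρmax)
    (ustar : EuclideanSpace ℝ (Fin nu)) (hfeas : ‖ustar‖ ≤ σ)
    (hmin : ∀ u : EuclideanSpace ℝ (Fin nu), ‖u‖ ≤ σ →
      ⟪η, mulVecE M ustar⟫ ≤ ⟪η, mulVecE M u⟫)
    (hMη : mulVecE Mᵀ η ≠ 0) :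
    ‖ustar‖ = σ ∧ ρmin ≤ ‖ustar‖ ∧ ‖ustar‖ ≤ ρmax :=
  stmt_9_general nx nu M η σ ρmin ρmax h1 h2 ustar hfeas hmin hMη
end

section
/- Fix N ≥ 1, n_x, n_u ≥ 1, and reals 0 < ρ_min ≤ ρ̃ ≤ ρ_max. Let u₁, …, u_{N+1} ∈ ℝ^{n_u} satisfy the rate constraint ‖u_{i+1} − u_i‖ ≤ 2√(ρ̃² − ρ_min²) for every i ∈ {1, …, N}, and suppose the set of vertices violating the perturbed bounds, S = {i ∈ {1, …, N+1} : ¬(ρ̃ ≤ ‖u_i‖ ≤ ρ_max)}, has cardinality at most n_x + 1. Then the set of edges along which LCvx is violated, {i ∈ {1, …, N} : ∃ t ∈ [0, 1], ¬(ρ_min ≤ ‖(1 − t)·u_i + t·u_{i+1}‖ ≤ ρ_max)}, has cardinality at most 2n_x + 2. (Deterministic core of the paper's proposition on the feasible interval: if at most n_x + 1 vertices violate the perturbed nonconvex constraint and the rate constraints hold, then the piecewise linear control violates LCvx along at most 2n_x + 2 edges.) -/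
open scoped Classical

/-!
On an edge whose two endpoints satisfy `ρ̃ ≤ ‖uᵢ‖ ≤ ρ_max`, the upper bound persists by convexity
of the ball, and the lower bound persists because
`‖(1 - t)a + tb‖² = (1 - t)‖a‖² + t‖b‖² - t(1 - t)‖b - a‖²` and `t(1 - t) ≤ 1/4`: the rate constraint
makes the loss at most `ρ̃² - ρ_min²`. Hence every violating edge has a violating endpoint, and each
violating vertex is an endpoint of at most two edges.
-/

section ConvexCombination

variable {E : Type*} [NormedAddCommGroup E] [InnerProductSpace ℝ E]

theorem norm_sub_smul_add_smul_sq (a b : E) (t : ℝ) :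
    ‖(1 - t) • a + t • b‖ ^ 2 = (1 - t) * ‖a‖ ^ 2 + t * ‖b‖ ^ 2 - t * (1 - t) * ‖b - a‖ ^ 2 := by
  rw [norm_add_sq_real, norm_sub_sq_real, norm_smul, norm_smul, real_inner_smul_left,
    real_inner_smul_right, Real.norm_eq_abs, Real.norm_eq_abs, mul_pow, mul_pow, sq_abs, sq_abs,
    real_inner_comm]
  ring

theorem sq_le_norm_sub_smul_add_smul_sq {a b : E} {r ρ t : ℝ} (ha : ρ ^ 2 ≤ ‖a‖ ^ 2)
    (hb : ρ ^ 2 ≤ ‖b‖ ^ 2) (hab : ‖b - a‖ ^ 2 ≤ 4 * (ρ ^ 2 - r ^ 2)) (ht₀ : 0 ≤ t) (ht₁ : t ≤ 1) :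
    r ^ 2 ≤ ‖(1 - t) • a + t • b‖ ^ 2 := by
  have hgap : 0 ≤ ρ ^ 2 - r ^ 2 := by nlinarith [sq_nonneg ‖b - a‖]
  have hquarter : 4 * (t * (1 - t)) ≤ 1 := by nlinarith [sq_nonneg (2 * t - 1)]
  have hloss : t * (1 - t) * ‖b - a‖ ^ 2 ≤ ρ ^ 2 - r ^ 2 :=
    calc t * (1 - t) * ‖b - a‖ ^ 2 ≤ t * (1 - t) * (4 * (ρ ^ 2 - r ^ 2)) := by
          gcongr
      _ ≤ ρ ^ 2 - r ^ 2 := by nlinarith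
  rw [norm_sub_smul_add_smul_sq]
  nlinarith

theorem mem_annulus_sub_smul_add_smul {a b : E} {r ρ R t : ℝ} (hrρ : r ≤ ρ)
    (ha : ρ ≤ ‖a‖ ∧ ‖a‖ ≤ R) (hb : ρ ≤ ‖b‖ ∧ ‖b‖ ≤ R)
    (hab : ‖b - a‖ ≤ 2 * Real.sqrt (ρ ^ 2 - r ^ 2)) (ht₀ : 0 ≤ t) (ht₁ : t ≤ 1) :
    r ≤ ‖(1 - t) • a + t • b‖ ∧ ‖(1 - t) • a + t • b‖ ≤ R := by
  constructor
  · rcases le_or_gt r 0 with hr | hr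
    · exact hr.trans (norm_nonneg _)
    have hρ : 0 ≤ ρ := hr.le.trans hrρ
    have hab' : ‖b - a‖ ^ 2 ≤ 4 * (ρ ^ 2 - r ^ 2) := by
      calc ‖b - a‖ ^ 2 ≤ (2 * Real.sqrt (ρ ^ 2 - r ^ 2)) ^ 2 := by gcongr
        _ = 4 * (ρ ^ 2 - r ^ 2) := by
          rw [mul_pow, Real.sq_sqrt (by nlinarith)]
          ring
    have := sq_le_norm_sub_smul_add_smul_sq (by gcongr; exact ha.1) (by gcongr; exact hb.1)
      hab' ht₀ ht₁
    exact (pow_le_pow_iff_left₀ hr.le (norm_nonneg _) two_ne_zero).1 this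
  · have hball := convex_closedBall (0 : E) R (mem_closedBall_zero_iff.2 ha.2)
      (mem_closedBall_zero_iff.2 hb.2) (sub_nonneg.2 ht₁) ht₀ (sub_add_cancel 1 t)
    exact mem_closedBall_zero_iff.1 hball

end ConvexCombination

theorem card_filter_Icc_le_two_mul {N : ℕ} {p q : ℕ → Prop} [DecidablePred p] [DecidablePred q]
    (h : ∀ i ∈ Finset.Icc 1 N, p i → q i ∨ q (i + 1)) :
    ((Finset.Icc 1 N).filter p).card ≤ 2 * ((Finset.Icc 1 (N + 1)).filter q).card := by
  set S := (Finset.Icc 1 (N + 1)).filter q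
  have hsub : (Finset.Icc 1 N).filter p ⊆ S ∪ S.image (· - 1) := by
    intro i hi
    obtain ⟨hiI, hpi⟩ := Finset.mem_filter.1 hi
    have hiI' := Finset.mem_Icc.1 hiI
    rcases h i hiI hpi with hqi | hqi
    · exact Finset.mem_union_left _ (Finset.mem_filter.2 ⟨Finset.mem_Icc.2 ⟨hiI'.1, by omega⟩, hqi⟩)
    · exact Finset.mem_union_right _ (Finset.mem_image.2
        ⟨i + 1, Finset.mem_filter.2 ⟨Finset.mem_Icc.2 ⟨by omega, by omega⟩, hqi⟩, by omega⟩)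
  calc ((Finset.Icc 1 N).filter p).card ≤ (S ∪ S.image (· - 1)).card := Finset.card_le_card hsub
    _ ≤ S.card + (S.image (· - 1)).card := Finset.card_union_le _ _
    _ ≤ 2 * S.card := by linarith [Finset.card_image_le (s := S) (f := (· - 1))]

theorem stmt_15_general (N nx nu : ℕ)
    (ρmin ρt ρmax : ℝ) (h1 : ρmin ≤ ρt)
    (u : ℕ → EuclideanSpace ℝ (Fin nu))
    (hrate : ∀ i ∈ Finset.Icc 1 N,
      ‖u (i + 1) - u i‖ ≤ 2 * Real.sqrt (ρt ^ 2 - ρmin ^ 2))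
    (hS : ((Finset.Icc 1 (N + 1)).filter
      (fun i => ¬(ρt ≤ ‖u i‖ ∧ ‖u i‖ ≤ ρmax))).card ≤ nx + 1) :
    ((Finset.Icc 1 N).filter (fun i => ∃ t ∈ Set.Icc (0 : ℝ) 1,
      ¬(ρmin ≤ ‖(1 - t) • u i + t • u (i + 1)‖ ∧
        ‖(1 - t) • u i + t • u (i + 1)‖ ≤ ρmax))).card ≤ 2 * nx + 2 := by
  have hedge : ∀ i ∈ Finset.Icc 1 N, (∃ t ∈ Set.Icc (0 : ℝ) 1,
      ¬(ρmin ≤ ‖(1 - t) • u i + t • u (i + 1)‖ ∧ ‖(1 - t) • u i + t • u (i + 1)‖ ≤ ρmax)) →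
      ¬(ρt ≤ ‖u i‖ ∧ ‖u i‖ ≤ ρmax) ∨ ¬(ρt ≤ ‖u (i + 1)‖ ∧ ‖u (i + 1)‖ ≤ ρmax) := by
    rintro i hi ⟨t, ⟨ht₀, ht₁⟩, hviol⟩
    by_contra! hgood
    exact hviol (mem_annulus_sub_smul_add_smul h1 hgood.1 hgood.2 (hrate i hi) ht₀ ht₁)
  calc _ ≤ 2 * _ := card_filter_Icc_le_two_mul hedge
    _ ≤ 2 * nx + 2 := by omega

/-- Deterministic core of the feasible-interval proposition: if the piecewise
linear controls satisfy the rate constraint `‖u_{i+1} − u_i‖ ≤ 2√(ρ̃² − ρ_min²)`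
on every edge and the perturbed bounds `ρ̃ ≤ ‖uᵢ‖ ≤ ρ_max` are violated at no
more than `n_x + 1` vertices, then LCvx (`ρ_min ≤ ‖u(t)‖ ≤ ρ_max` along the
interpolated edge) is violated along at most `2n_x + 2` edges. -/
theorem stmt_15 (N nx nu : ℕ) (hN : 1 ≤ N) (hnx : 1 ≤ nx) (hnu : 1 ≤ nu)
    (ρmin ρt ρmax : ℝ) (h0 : 0 < ρmin) (h1 : ρmin ≤ ρt) (h2 : ρt ≤ ρmax)
    (u : ℕ → EuclideanSpace ℝ (Fin nu))
    (hrate : ∀ i ∈ Finset.Icc 1 N,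
      ‖u (i + 1) - u i‖ ≤ 2 * Real.sqrt (ρt ^ 2 - ρmin ^ 2))
    (hS : ((Finset.Icc 1 (N + 1)).filter
      (fun i => ¬(ρt ≤ ‖u i‖ ∧ ‖u i‖ ≤ ρmax))).card ≤ nx + 1) :
    ((Finset.Icc 1 N).filter (fun i => ∃ t ∈ Set.Icc (0 : ℝ) 1,
      ¬(ρmin ≤ ‖(1 - t) • u i + t • u (i + 1)‖ ∧
        ‖(1 - t) • u i + t • u (i + 1)‖ ≤ ρmax))).card ≤ 2 * nx + 2 :=
  stmt_15_general N nx nu ρmin ρt ρmax h1 u hrate hS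
end
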